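/- Let n ≥ 1 and let A(x,y) be the n×n tridiagonal matrix over a field with entries [A]_{j,j} = a_j, [A]_{j,j+1} = c_j·x^j, and [A]_{j+1,j} = b_j·y^j. Define the diagonal matrix D(x,y) with d_1 = 1, d_{2m} = ∏_{k=1}^m y^{2k−2}/x^{2k−1}, and d_{2m+1} = ∏_{k=1}^m y^{2k−1}/x^{2k} (for x, y nonzero). Then B := D(y,x)·A(x,y)·D(x,y) is tridiagonal with [B]_{j,j+1} = c_j, [B]_{j+1,j} = b_j, and [B]_{j,j} = a_j/(x·y)^{⌊j/2⌋}. -/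
import Mathlib


open Finset in
/-- The diagonal coefficients d_j(x,y) (1-indexed): d_1 = 1,
d_{2m} = ∏_{k=1}^m y^{2k−2}/x^{2k−1}, d_{2m+1} = ∏_{k=1}^m y^{2k−1}/x^{2k}. -/
def dcoef {𝕜 : Type*} [Field 𝕜] (x y : 𝕜) (j : ℕ) : 𝕜 :=
  if j % 2 = 0 then ∏ k ∈ Finset.Icc 1 (j / 2), y ^ (2 * k - 2) / x ^ (2 * k - 1)
  else ∏ k ∈ Finset.Icc 1 (j / 2), y ^ (2 * k - 1) / x ^ (2 * k)

open Finset in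
lemma p1 {𝕜 : Type*} [Field 𝕜] (x y : 𝕜) (m : ℕ) :
    ∏ k ∈ Finset.Icc 1 m, y ^ (2 * k - 2) / x ^ (2 * k - 1)
      = y ^ (m * (m - 1)) / x ^ (m * m) := by
  induction m with
  | zero => simp
  | succ m ih =>
    rw [Finset.prod_Icc_succ_top (by omega), ih]
    rw [show 2 * (m + 1) - 2 = 2 * m by omega, show 2 * (m + 1) - 1 = 2 * m + 1 by omega]
    rw [div_mul_div_comm, ← pow_add, ← pow_add]
    congr 2
    · cases m with
      | zero => simp
      | succ k => simp only [Nat.succ_sub_one]; ring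
    · ring

open Finset in
lemma p2 {𝕜 : Type*} [Field 𝕜] (x y : 𝕜) (m : ℕ) :
    ∏ k ∈ Finset.Icc 1 m, y ^ (2 * k - 1) / x ^ (2 * k)
      = y ^ (m * m) / x ^ (m * (m + 1)) := by
  induction m with
  | zero => simp
  | succ m ih =>
    rw [Finset.prod_Icc_succ_top (by omega), ih]
    rw [show 2 * (m + 1) - 1 = 2 * m + 1 by omega]
    rw [div_mul_div_comm, ← pow_add, ← pow_add]
    congr 2 <;> ring

lemma dcoef_odd {𝕜 : Type*} [Field 𝕜] (x y : 𝕜) (m : ℕ) :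
    dcoef x y (2 * m + 1) = y ^ (m * m) / x ^ (m * (m + 1)) := by
  have h1 : (2 * m + 1) % 2 = 1 := by omega
  have h2 : (2 * m + 1) / 2 = m := by omega
  rw [dcoef, h1, h2]
  simpa using p2 x y m

lemma dcoef_even {𝕜 : Type*} [Field 𝕜] (x y : 𝕜) (m : ℕ) :
    dcoef x y (2 * m + 2) = y ^ ((m + 1) * m) / x ^ ((m + 1) * (m + 1)) := by
  have h1 : (2 * m + 2) % 2 = 0 := by omega
  have h2 : (2 * m + 2) / 2 = m + 1 := by omega
  rw [dcoef, h1, h2]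
  simpa using p1 x y (m + 1)

lemma key1 {𝕜 : Type*} [Field 𝕜] (x y : 𝕜) (hx : x ≠ 0) (hy : y ≠ 0) (a : 𝕜) (e m : ℕ) :
    x ^ e / y ^ (e + m) * a * (y ^ e / x ^ (e + m)) = a / (x * y) ^ m := by
  rw [pow_add, pow_add, mul_pow]
  field_simp

lemma key2 {𝕜 : Type*} [Field 𝕜] (x y : 𝕜) (hx : x ≠ 0) (hy : y ≠ 0) (c : 𝕜) (e f m : ℕ) :
    x ^ e / y ^ f * (c * x ^ m) * (y ^ f / x ^ (e + m)) = c := by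
  rw [pow_add]
  field_simp

lemma key3 {𝕜 : Type*} [Field 𝕜] (x y : 𝕜) (hx : x ≠ 0) (hy : y ≠ 0) (b : 𝕜) (e f m : ℕ) :
    x ^ f / y ^ (e + m) * (b * y ^ m) * (y ^ e / x ^ f) = b := by
  rw [pow_add]
  field_simp

open Matrix in
/-- Conjugating the tridiagonal matrix A(x,y) by the diagonal matrices
D(y,x), D(x,y) yields a tridiagonal matrix B with [B]_{j,j+1} = c_j,
[B]_{j+1,j} = b_j and [B]_{j,j} = a_j/(xy)^{⌊j/2⌋}. -/
theorem stmt_8 {𝕜 : Type*} [Field 𝕜] (n : ℕ) (hn : 1 ≤ n) (x y : 𝕜)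
    (hx : x ≠ 0) (hy : y ≠ 0) (a b c : ℕ → 𝕜)
    (A : Matrix (Fin n) (Fin n) 𝕜)
    (hA : ∀ i j : Fin n,
      A i j = if (i : ℕ) = (j : ℕ) then a ((i : ℕ) + 1)
        else if (j : ℕ) = (i : ℕ) + 1 then c ((i : ℕ) + 1) * x ^ ((i : ℕ) + 1)
        else if (i : ℕ) = (j : ℕ) + 1 then b ((j : ℕ) + 1) * y ^ ((j : ℕ) + 1)
        else 0)
    (B : Matrix (Fin n) (Fin n) 𝕜)
    (hB : B = Matrix.diagonal (fun i : Fin n => dcoef y x ((i : ℕ) + 1)) * A *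
      Matrix.diagonal (fun i : Fin n => dcoef x y ((i : ℕ) + 1))) :
    (∀ i : Fin n, B i i = a ((i : ℕ) + 1) / (x * y) ^ (((i : ℕ) + 1) / 2)) ∧
      (∀ i j : Fin n, (j : ℕ) = (i : ℕ) + 1 →
        B i j = c ((i : ℕ) + 1) ∧ B j i = b ((i : ℕ) + 1)) ∧
      (∀ i j : Fin n, (i : ℕ) + 1 < (j : ℕ) ∨ (j : ℕ) + 1 < (i : ℕ) →
        B i j = 0) := by
  subst hB
  have hent : ∀ i j : Fin n,
      (Matrix.diagonal (fun i : Fin n => dcoef y x ((i : ℕ) + 1)) * A *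
        Matrix.diagonal (fun i : Fin n => dcoef x y ((i : ℕ) + 1))) i j
      = dcoef y x ((i : ℕ) + 1) * A i j * dcoef x y ((j : ℕ) + 1) := by
    intro i j
    rw [Matrix.mul_diagonal, Matrix.diagonal_mul]
  refine ⟨?_, ?_, ?_⟩
  · intro i
    rw [hent, hA]
    simp only [if_pos rfl]
    rcases Nat.even_or_odd (i : ℕ) with ⟨m, hm⟩ | ⟨m, hm⟩
    · have hm' : (i : ℕ) = 2 * m := by omega
      rw [hm', show 2 * m + 1 = 2 * m + 1 from rfl, dcoef_odd, dcoef_odd,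
        show (2 * m + 1) / 2 = m by omega, show m * (m + 1) = m * m + m by ring]
      exact key1 x y hx hy _ _ _
    · rw [hm, show 2 * m + 1 + 1 = 2 * m + 2 from rfl, dcoef_even, dcoef_even,
        show (2 * m + 1 + 1) / 2 = m + 1 by omega,
        show (m + 1) * (m + 1) = (m + 1) * m + (m + 1) by ring]
      exact key1 x y hx hy _ _ _
  · intro i j hij
    constructor
    · rw [hent, hA, if_neg (by omega), if_pos hij, hij]
      rcases Nat.even_or_odd (i : ℕ) with ⟨m, hm⟩ | ⟨m, hm⟩
      · have hm' : (i : ℕ) = 2 * m := by omega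
        rw [hm', dcoef_odd, show 2 * m + 1 + 1 = 2 * m + 2 from rfl, dcoef_even,
          show (m + 1) * m = m * (m + 1) by ring,
          show (m + 1) * (m + 1) = m * m + (2 * m + 1) by ring]
        exact key2 x y hx hy _ _ _ _
      · rw [hm, show 2 * m + 1 + 1 = 2 * m + 2 from rfl, dcoef_even,
          show 2 * m + 2 + 1 = 2 * (m + 1) + 1 from rfl, dcoef_odd,
          show (m + 1) * (m + 1 + 1) = (m + 1) * m + (2 * m + 2) by ring]
        exact key2 x y hx hy _ _ _ _
    · rw [hent, hA, if_neg (by omega), if_neg (by omega), if_pos hij, hij]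
      rcases Nat.even_or_odd (i : ℕ) with ⟨m, hm⟩ | ⟨m, hm⟩
      · have hm' : (i : ℕ) = 2 * m := by omega
        rw [hm', show 2 * m + 1 + 1 = 2 * m + 2 from rfl, dcoef_even, dcoef_odd,
          show (m + 1) * m = m * (m + 1) by ring,
          show (m + 1) * (m + 1) = m * m + (2 * m + 1) by ring]
        exact key3 x y hx hy _ _ _ _
      · rw [hm, show 2 * m + 1 + 1 + 1 = 2 * (m + 1) + 1 from rfl, dcoef_odd,
          show 2 * m + 1 + 1 = 2 * m + 2 from rfl, dcoef_even,
          show (m + 1) * (m + 1 + 1) = (m + 1) * m + (2 * m + 2) by ring]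
        exact key3 x y hx hy _ _ _ _
  · intro i j h
    rw [hent, hA, if_neg (by omega), if_neg (by omega), if_neg (by omega)]
    ring
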